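/- Let μ > 0 and α > 0 be real numbers. Then the Gompertz density integrates to one: ∫₀^∞ μ exp(α t) exp(-(μ/α)(exp(α t) - 1)) dt = 1. -/

import Mathlib

/-!
The Gompertz density is `-S'` for the survival function `S t = exp (-(μ / α) * (exp (α t) - 1))`.
Since `S 0 = 1` and, for `μ / α > 0`, `S t → 0` as `t → ∞`, the fundamental theorem of calculus
on `[0, ∞)` gives total mass `S 0 - 0 = 1`.
-/

open Real MeasureTheory Filter Topology

namespace Gompertz

noncomputable def survival (μ α t : ℝ) : ℝ :=
  exp (-(μ / α) * (exp (α * t) - 1))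

noncomputable def density (μ α t : ℝ) : ℝ :=
  μ * exp (α * t) * survival μ α t

@[simp]
lemma survival_zero (μ α : ℝ) : survival μ α 0 = 1 := by
  simp [survival]

lemma continuous_survival (μ α : ℝ) : Continuous (survival μ α) := by
  unfold survival
  fun_prop

lemma density_nonneg {μ : ℝ} (hμ : 0 ≤ μ) (α t : ℝ) : 0 ≤ density μ α t := by
  unfold density survival
  positivity

lemma hasDerivAt_survival (μ : ℝ) {α : ℝ} (hα : α ≠ 0) (t : ℝ) :
    HasDerivAt (survival μ α) (-density μ α t) t := by
  have hexp : HasDerivAt (fun s => exp (α * s)) (exp (α * t) * α) t := by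
    simpa using ((hasDerivAt_id t).const_mul α).exp
  unfold density survival
  convert ((hexp.sub_const 1).const_mul (-(μ / α))).exp using 1
  field_simp

lemma tendsto_survival_atTop {μ α : ℝ} (hμ : 0 < μ) (hα : 0 < α) :
    Tendsto (survival μ α) atTop (𝓝 0) := by
  have hexp : Tendsto (fun t => exp (α * t) - 1) atTop atTop :=
    tendsto_atTop_add_const_right _ (-1)
      (tendsto_exp_atTop.comp (tendsto_id.const_mul_atTop hα))
  exact tendsto_exp_atBot.comp
    (hexp.const_mul_atTop_of_neg (neg_lt_zero.mpr (div_pos hμ hα)))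

theorem integral_Ioi_density {μ α : ℝ} (hμ : 0 < μ) (hα : 0 < α) (a : ℝ) :
    ∫ t in Set.Ioi a, density μ α t = survival μ α a := by
  have hFTC := integral_Ioi_of_hasDerivAt_of_nonneg (g := fun t => -survival μ α t) (a := a)
    (continuous_survival μ α).neg.continuousWithinAt
    (fun t _ => (hasDerivAt_survival μ hα.ne' t).neg.congr_deriv (neg_neg _))
    (fun t _ => density_nonneg hμ.le α t)
    (by simpa using (tendsto_survival_atTop hμ hα).neg)
  rw [hFTC, zero_sub, neg_neg]

end Gompertz

/-- The Gompertz density with positive shape `α > 0` integrates to one. -/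
theorem gompertz_integral_eq_one (μ α : ℝ) (hμ : 0 < μ) (hα : 0 < α) :
    (∫ t in Set.Ioi (0 : ℝ),
        μ * Real.exp (α * t) * Real.exp (-(μ / α) * (Real.exp (α * t) - 1)))
      = 1 := by
  have h := Gompertz.integral_Ioi_density hμ hα 0
  rwa [Gompertz.survival_zero] at h
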